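/- For a linear context-free grammar G in Chomsky normal form, every parse tree of height h has at most h + 1 leaves; combined with the height bound |N|·n² for shortest words in intersections with n-state automaton languages, the rational index of any linear language is O(n²). -/

import Mathlib

/-- A context-free grammar in Chomsky normal form (ignoring the rule `S → ε`):
rules are `A → BC` and `A → a`. -/
structure CNF (T N : Type) where
  start : N
  binRule : N → N → N → Prop   -- A → B C
  termRule : N → T → Prop      -- A → a

/-- Parse trees of a grammar in Chomsky normal form. -/
inductive DTree (T N : Type) where
  | leaf : N → T → DTree T N
  | node : N → DTree T N → DTree T N → DTree T N

namespace DTree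

variable {T N : Type}

/-- Nonterminal at the root. -/
def rootN : DTree T N → N
  | leaf A _ => A
  | node A _ _ => A

/-- The terminal word at the leaves. -/
def yield : DTree T N → List T
  | leaf _ a => [a]
  | node _ l r => yield l ++ yield r

/-- Height: number of edges on a longest root-to-leaf path. -/
def height : DTree T N → ℕ
  | leaf _ _ => 0
  | node _ l r => max (height l) (height r) + 1

/-- Dimension: leaves have dimension 0; an internal node has the maximum of its
children's dimensions if uniquely attained, else that maximum plus one. -/
def dim : DTree T N → ℕ
  | leaf _ _ => 0
  | node _ l r => if dim l = dim r then dim l + 1 else max (dim l) (dim r)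

/-- A tree is a valid parse tree with respect to the grammar `g`. -/
def wf (g : CNF T N) : DTree T N → Prop
  | leaf A a => g.termRule A a
  | node A l r => g.binRule A (rootN l) (rootN r) ∧ wf g l ∧ wf g r

end DTree

/-- `A` derives the terminal word `w` in `g`. -/
def CNF.Derives (g : CNF T N) (A : N) (w : List T) : Prop :=
  ∃ t : DTree T N, t.wf g ∧ t.rootN = A ∧ t.yield = w

/-- The language generated by the grammar. -/
def CNF.Lang (g : CNF T N) : Set (List T) := {w | g.Derives g.start w}

/-- `GWord δ i w j`: there is a path from state `i` to state `j` labeled by `w`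
in the labeled transition relation `δ`. -/
def GWord {Q T : Type} (δ : Q → T → Q → Prop) : Q → List T → Q → Prop
  | i, [], j => i = j
  | i, a :: w, j => ∃ k, δ i a k ∧ GWord δ k w j

/-- Acceptance by an NFA given by transition relation `δ`, initial states `I`
and final states `F`. -/
def NfaLang {Q T : Type} (δ : Q → T → Q → Prop) (I F : Set Q) : Set (List T) :=
  {w | ∃ i ∈ I, ∃ j ∈ F, GWord δ i w j}

namespace DTree

/-- Number of leaves of a parse tree. -/
def leaves {T N : Type} : DTree T N → ℕ
  | leaf _ _ => 1
  | node _ l r => leaves l + leaves r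

/-- A parse tree is linear if at every binary node at least one of the two
subtrees has height 0 (i.e. at most one of `B`, `C` in a rule `A → BC` derives
a subtree of height > 0). -/
def IsLinear {T N : Type} : DTree T N → Prop
  | leaf _ _ => True
  | node _ l r => (l.height = 0 ∨ r.height = 0) ∧ IsLinear l ∧ IsLinear r

end DTree

section Aux

variable {T N Q : Type} (g : CNF T N) (δ : Q → T → Q → Prop)

lemma height_eq_zero {t : DTree T N} (h : t.height = 0) :
    ∃ B b, t = DTree.leaf B b := by
  cases t with
  | leaf B b => exact ⟨B, b, rfl⟩
  | node A l r => simp [DTree.height] at h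

lemma leaves_le_height (t : DTree T N) (h : t.IsLinear) :
    t.leaves ≤ t.height + 1 := by
  induction t with
  | leaf A a => simp [DTree.leaves, DTree.height]
  | node A l r ihl ihr =>
    obtain ⟨h0, hl, hr⟩ := h
    rcases h0 with h0 | h0
    · obtain ⟨B, b, rfl⟩ := height_eq_zero h0
      have := ihr hr
      simp only [DTree.leaves, DTree.height] at *
      omega
    · obtain ⟨B, b, rfl⟩ := height_eq_zero h0
      have := ihl hl
      simp only [DTree.leaves, DTree.height] at *
      omega

lemma gword_append (u v : List T) (i j : Q) :
    GWord δ i (u ++ v) j ↔ ∃ k, GWord δ i u k ∧ GWord δ k v j := by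
  induction u generalizing i with
  | nil => simp [GWord]
  | cons a u ih =>
    simp only [List.cons_append, GWord, List.append_eq, ih]
    constructor
    · rintro ⟨k, hk, k', h1, h2⟩; exact ⟨k', ⟨k, hk, h1⟩, h2⟩
    · rintro ⟨k', ⟨k, hk, h1⟩, h2⟩; exact ⟨k, hk, k', h1, h2⟩

/-- Linear derivations with NFA state tracking: `LD A i j n` means `A` derives
a word of length `n` reading the NFA from state `i` to state `j`. -/
inductive LD : N → Q → Q → ℕ → Prop
  | term {A : N} {a : T} {i j : Q} : g.termRule A a → δ i a j → LD A i j 1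
  | left {A B C : N} {b : T} {i k j : Q} {n : ℕ} :
      g.binRule A B C → g.termRule B b → δ i b k → LD C k j n → LD A i j (n + 1)
  | right {A B C : N} {c : T} {i k j : Q} {n : ℕ} :
      g.binRule A B C → g.termRule C c → δ k c j → LD B i k n → LD A i j (n + 1)

lemma tree_to_LD : ∀ t : DTree T N, t.wf g → t.IsLinear →
    ∀ i j : Q, GWord δ i t.yield j → LD g δ t.rootN i j t.yield.length := by
  intro t
  induction t with
  | leaf A a =>
    intro _ _ i j hG
    obtain ⟨k, hk, rfl⟩ := hG
    exact LD.term ‹g.termRule A a› hk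
  | node A l r ihl ihr =>
    intro hwf hlin i j hG
    obtain ⟨hbin, hwl, hwr⟩ := hwf
    obtain ⟨h0, hl, hr⟩ := hlin
    rcases h0 with h0 | h0
    · obtain ⟨B, b, rfl⟩ := height_eq_zero h0
      simp only [DTree.yield, List.singleton_append] at hG ⊢
      obtain ⟨k, hk, hG'⟩ := hG
      have := ihr hwr hr k j hG'
      simpa [DTree.rootN] using LD.left hbin hwl hk this
    · obtain ⟨C, c, rfl⟩ := height_eq_zero h0
      simp only [DTree.yield] at hG ⊢
      rw [gword_append] at hG
      obtain ⟨k, hG', k', hk', rfl⟩ := hG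
      have := ihl hwl hl i k hG'
      simpa [Nat.add_comm, DTree.rootN] using LD.right hbin hwr hk' this

lemma LD_to_tree {A : N} {i j : Q} {n : ℕ} (h : LD g δ A i j n) :
    ∃ t : DTree T N, t.wf g ∧ t.rootN = A ∧ t.yield.length = n ∧
      GWord δ i t.yield j := by
  induction h with
  | @term A a i j ht hd =>
    exact ⟨DTree.leaf A a, ht, rfl, rfl, ⟨j, hd, rfl⟩⟩
  | @left A B C b i k j n hbin ht hd _ ih =>
    obtain ⟨t, hwf, hroot, hlen, hG⟩ := ih
    refine ⟨DTree.node A (DTree.leaf B b) t, ⟨?_, ht, hwf⟩, rfl, ?_, ?_⟩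
    · rw [hroot]; exact hbin
    · simp [DTree.yield, hlen]
    · exact ⟨k, hd, hG⟩
  | @right A B C c i k j n hbin ht hd _ ih =>
    obtain ⟨t, hwf, hroot, hlen, hG⟩ := ih
    refine ⟨DTree.node A t (DTree.leaf C c), ⟨?_, hwf, ht⟩, rfl, ?_, ?_⟩
    · rw [hroot]; exact hbin
    · simp [DTree.yield, hlen]
    · rw [DTree.yield, gword_append]
      exact ⟨k, hG, ⟨j, hd, rfl⟩⟩

/-- `v` has minimal derivation length `m`. -/
def MinD (v : N × Q × Q) (m : ℕ) : Prop :=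
  LD g δ v.1 v.2.1 v.2.2 m ∧ ∀ m', LD g δ v.1 v.2.1 v.2.2 m' → m ≤ m'

lemma minD_exists {A : N} {i j : Q} {n : ℕ} (h : LD g δ A i j n) :
    ∃ m, MinD g δ (A, i, j) m ∧ m ≤ n := by
  classical
  have hex : ∃ m, LD g δ A i j m := ⟨n, h⟩
  exact ⟨Nat.find hex, ⟨Nat.find_spec hex, fun m' hm' => Nat.find_le hm'⟩,
    Nat.find_le h⟩

lemma minD_unique {v : N × Q × Q} {m m' : ℕ}
    (h : MinD g δ v m) (h' : MinD g δ v m') : m = m' :=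
  le_antisymm (h.2 _ h'.1) (h'.2 _ h.1)

lemma minD_step {v : N × Q × Q} {m : ℕ} (h : MinD g δ v (m + 2)) :
    ∃ v', MinD g δ v' (m + 1) := by
  obtain ⟨A, i, j⟩ := v
  obtain ⟨hld, hmin⟩ := h
  cases hld with
  | left hbin ht hd h' =>
    obtain ⟨m1, hm1, hle⟩ := minD_exists g δ h'
    have h2 : LD g δ A i j (m1 + 1) := LD.left hbin ht hd hm1.1
    have h3 := hmin _ h2
    have : m1 = m + 1 := by omega
    exact ⟨_, this ▸ hm1⟩
  | right hbin ht hd h' =>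
    obtain ⟨m1, hm1, hle⟩ := minD_exists g δ h'
    have h2 : LD g δ A i j (m1 + 1) := LD.right hbin ht hd hm1.1
    have h3 := hmin _ h2
    have : m1 = m + 1 := by omega
    exact ⟨_, this ▸ hm1⟩

lemma minD_chain {v : N × Q × Q} {m : ℕ} (h : MinD g δ v m) :
    ∀ d, d < m → ∃ v', MinD g δ v' (m - d) := by
  intro d
  induction d with
  | zero => intro _; exact ⟨v, by simpa using h⟩
  | succ d ih =>
    intro hd
    obtain ⟨v', hv'⟩ := ih (by omega)
    have h2 : m - d = (m - d - 2) + 2 := by omega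
    rw [h2] at hv'
    obtain ⟨v'', hv''⟩ := minD_step g δ hv'
    have h3 : m - d - 2 + 1 = m - (d + 1) := by omega
    exact ⟨v'', h3 ▸ hv''⟩

lemma LD_short [Fintype N] [Fintype Q] {A : N} {i j : Q} {n : ℕ}
    (h : LD g δ A i j n) :
    ∃ m ≤ Fintype.card N * Fintype.card Q ^ 2, LD g δ A i j m := by
  classical
  obtain ⟨m0, hm0, _⟩ := minD_exists g δ h
  refine ⟨m0, ?_, hm0.1⟩
  by_contra hK
  push_neg at hK
  have hcard : Fintype.card (N × Q × Q) = Fintype.card N * Fintype.card Q ^ 2 := by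
    rw [Fintype.card_prod, Fintype.card_prod]; ring
  have hne : Nonempty (N × Q × Q) := ⟨(A, i, j)⟩
  have H : ∀ k, k < m0 → ∃ v, MinD g δ v (m0 - k) := fun k hk =>
    minD_chain g δ hm0 k hk
  let f : ℕ → N × Q × Q := fun k =>
    if hk : k < m0 then (H k hk).choose else Classical.arbitrary _
  have hf : ∀ k, k < m0 → MinD g δ (f k) (m0 - k) := by
    intro k hk
    simp only [f, dif_pos hk]
    exact (H k hk).choose_spec
  have hmaps : ∀ k ∈ Finset.range m0, f k ∈ (Finset.univ : Finset (N × Q × Q)) :=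
    fun _ _ => Finset.mem_univ _
  have hlt : (Finset.univ : Finset (N × Q × Q)).card < (Finset.range m0).card := by
    rw [Finset.card_range, Finset.card_univ, hcard]
    exact hK
  obtain ⟨x, hx, y, hy, hxy, hfxy⟩ :=
    Finset.exists_ne_map_eq_of_card_lt_of_maps_to hlt hmaps
  rw [Finset.mem_range] at hx hy
  have := minD_unique g δ (hf x hx) (hfxy ▸ hf y hy)
  omega

end Aux

theorem linear_leaves_and_rational_index (T N : Type) [Fintype N]
    (g : CNF T N) (hlin : ∀ t : DTree T N, t.wf g → t.IsLinear) :
    (∀ t : DTree T N, t.wf g → t.leaves ≤ t.height + 1) ∧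
    ∃ C : ℕ, ∀ (Q : Type) [Fintype Q] (δ : Q → T → Q → Prop) (I F : Set Q),
      (g.Lang ∩ NfaLang δ I F).Nonempty →
      ∃ w ∈ g.Lang ∩ NfaLang δ I F, w.length ≤ C * (Fintype.card Q) ^ 2 := by
  refine ⟨fun t ht => leaves_le_height t (hlin t ht), Fintype.card N, ?_⟩
  intro Q _ δ I F ⟨w, hw1, hw2⟩
  obtain ⟨t, hwf, hroot, hyield⟩ := hw1
  obtain ⟨i, hi, j, hj, hG⟩ := hw2
  have hG' : GWord δ i t.yield j := by rw [hyield]; exact hG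
  have hld := tree_to_LD g δ t hwf (hlin t hwf) i j hG'
  rw [hroot] at hld
  obtain ⟨m, hm, hld'⟩ := LD_short g δ hld
  obtain ⟨t', hwf', hroot', hlen', hG''⟩ := LD_to_tree g δ hld'
  exact ⟨t'.yield, ⟨⟨t', hwf', hroot', rfl⟩, ⟨i, hi, j, hj, hG''⟩⟩,
    by rw [hlen']; exact hm⟩
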